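/- For any inner function u, the adjoint of the dual compressed shift satisfies D_u^* f = conj(z)·f − g(0)·C_u k_0^u for f ∈ K_u^⊥, where g = P^+(conj(u) f) ∈ H^2, C_u h = u·conj(z h), and k_0^u = 1 − conj(u(0)) u. In particular D_u^* restricted to conj(H^2_0) is multiplication by conj(z), so D_u^* maps conj(H^2_0) into conj(H^2_0). -/

import Mathlib

open MeasureTheory Complex AddCircle

noncomputable section

namespace Paper

/-- The period `2π`. -/
abbrev T : ℝ := 2 * Real.pi

instance : Fact (0 < T) := ⟨by positivity⟩

/-- Normalized Lebesgue (Haar) measure on the circle. -/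
abbrev μ : Measure (AddCircle T) := haarAddCircle

/-- The space `L²(𝕋, dm)`. -/
abbrev L2 : Type := Lp ℂ 2 μ

lemma memLp_mul {u : AddCircle T → ℂ} (hm : AEStronglyMeasurable u μ)
    (hb : ∀ᵐ x ∂μ, ‖u x‖ ≤ 1) (f : L2) :
    MemLp (fun x => u x * (f : AddCircle T → ℂ) x) 2 μ := by
  refine (Lp.memLp f).of_le (hm.mul (Lp.aestronglyMeasurable f)) ?_
  filter_upwards [hb] with x hx
  calc ‖u x * (f : AddCircle T → ℂ) x‖ = ‖u x‖ * ‖(f : AddCircle T → ℂ) x‖ := norm_mul _ _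
    _ ≤ 1 * ‖(f : AddCircle T → ℂ) x‖ := by gcongr
    _ = ‖(f : AddCircle T → ℂ) x‖ := one_mul _

/-- Multiplication by a measurable function bounded by `1`, as a bounded operator on `L²`. -/
def mulCLM (u : AddCircle T → ℂ) (hm : AEStronglyMeasurable u μ)
    (hb : ∀ᵐ x ∂μ, ‖u x‖ ≤ 1) : L2 →L[ℂ] L2 :=
  LinearMap.mkContinuous
    { toFun := fun f => (memLp_mul hm hb f).toLp _
      map_add' := fun f g => by
        show MemLp.toLp _ (memLp_mul hm hb (f + g)) = _
        have h : (fun x => u x * ((f + g : L2) : AddCircle T → ℂ) x)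
            =ᵐ[μ] (fun x => u x * (f : AddCircle T → ℂ) x)
              + (fun x => u x * (g : AddCircle T → ℂ) x) := by
          filter_upwards [Lp.coeFn_add f g] with x hx
          simp only [Pi.add_apply, hx, mul_add]
        rw [MemLp.toLp_congr (memLp_mul hm hb (f + g))
          ((memLp_mul hm hb f).add (memLp_mul hm hb g)) h, MemLp.toLp_add]
      map_smul' := fun c f => by
        have h : (fun x => u x * ((c • f : L2) : AddCircle T → ℂ) x)
            =ᵐ[μ] c • (fun x => u x * (f : AddCircle T → ℂ) x) := by
          filter_upwards [Lp.coeFn_smul c f] with x hx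
          simp only [Pi.smul_apply, hx, smul_eq_mul]
          ring
        simp only [RingHom.id_apply]
        rw [MemLp.toLp_congr (memLp_mul hm hb (c • f))
          ((memLp_mul hm hb f).const_smul c) h, MemLp.toLp_const_smul] }
    1
    (fun f => by
      simp only [LinearMap.coe_mk, AddHom.coe_mk, one_mul]
      rw [Lp.norm_toLp]
      have h1 : eLpNorm (fun x => u x * (f : AddCircle T → ℂ) x) 2 μ
          ≤ eLpNorm (f : AddCircle T → ℂ) 2 μ := by
        refine eLpNorm_mono_ae ?_
        filter_upwards [hb] with x hx
        calc ‖u x * (f : AddCircle T → ℂ) x‖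
            = ‖u x‖ * ‖(f : AddCircle T → ℂ) x‖ := norm_mul _ _
          _ ≤ 1 * ‖(f : AddCircle T → ℂ) x‖ := by gcongr
          _ = ‖(f : AddCircle T → ℂ) x‖ := one_mul _
      calc (eLpNorm (fun x => u x * (f : AddCircle T → ℂ) x) 2 μ).toReal
          ≤ (eLpNorm (f : AddCircle T → ℂ) 2 μ).toReal :=
            ENNReal.toReal_mono (Lp.eLpNorm_ne_top f) h1
        _ = ‖f‖ := (Lp.norm_def f).symm)

lemma memLp_conj (f : L2) :
    MemLp (fun x => (starRingEnd ℂ) ((f : AddCircle T → ℂ) x)) 2 μ := by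
  refine (Lp.memLp f).of_le ?_ ?_
  · exact Complex.continuous_conj.comp_aestronglyMeasurable (Lp.aestronglyMeasurable f)
  · filter_upwards with x
    simp

/-- Complex conjugation on `L²`. -/
def conjL2 (f : L2) : L2 := (memLp_conj f).toLp _

/-- The independent variable `z = e^{iθ}` as a function on the circle. -/
def zfun : AddCircle T → ℂ := fun x => fourier 1 x

lemma zfun_meas : AEStronglyMeasurable zfun μ :=
  ((map_continuous (fourier (T := T) 1)).aestronglyMeasurable)

lemma zfun_norm : ∀ᵐ x ∂μ, ‖zfun x‖ ≤ 1 := by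
  filter_upwards with x
  simp [zfun, Circle.norm_coe]

/-- Multiplication by `z` (the bilateral shift `M` on `L²`). -/
def Mz : L2 →L[ℂ] L2 := mulCLM zfun zfun_meas zfun_norm

/-- Multiplication by `conj z`. -/
def Mzbar : L2 →L[ℂ] L2 :=
  mulCLM (fun x => (starRingEnd ℂ) (zfun x))
    (Complex.continuous_conj.comp_aestronglyMeasurable zfun_meas)
    (by filter_upwards with x; simp [zfun, Circle.norm_coe])

/-- The Hardy space `H² = {f ∈ L² : f̂(n) = 0 for all n < 0}`. -/
def H2 : Submodule ℂ L2 where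
  carrier := {f | ∀ n : ℤ, n < 0 → fourierBasis.repr f n = 0}
  add_mem' := by
    intro f g hf hg n hn
    simp [map_add, hf n hn, hg n hn]
  zero_mem' := by intro n hn; simp
  smul_mem' := by
    intro c f hf n hn
    simp [_root_.map_smul, hf n hn]

lemma continuous_coeff (n : ℤ) :
    Continuous fun f : L2 => fourierBasis.repr f n := by
  rw [Metric.continuous_iff]
  intro f ε hε
  refine ⟨ε, hε, fun g hg => ?_⟩
  have h1 : fourierBasis.repr g n - fourierBasis.repr f n = fourierBasis.repr (g - f) n := by
    simp [map_sub]
  have h2 : ‖fourierBasis.repr (g - f) n‖ ≤ ‖fourierBasis.repr (g - f)‖ :=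
    lp.norm_apply_le_norm (by norm_num) _ n
  have h3 : ‖fourierBasis.repr (g - f)‖ = ‖g - f‖ :=
    fourierBasis.repr.norm_map _
  calc dist (fourierBasis.repr g n) (fourierBasis.repr f n)
      = ‖fourierBasis.repr (g - f) n‖ := by rw [dist_eq_norm, h1]
    _ ≤ ‖g - f‖ := by rw [← h3]; exact h2
    _ = dist g f := (dist_eq_norm g f).symm
    _ < ε := hg

lemma H2_isClosed : IsClosed (H2 : Set L2) := by
  have : (H2 : Set L2) =
      ⋂ n ∈ {m : ℤ | m < 0}, {f : L2 | fourierBasis.repr f n = 0} := by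
    ext f
    simp only [Set.mem_iInter, Set.mem_setOf_eq]
    rfl
  rw [this]
  exact isClosed_biInter fun n _ => isClosed_eq (continuous_coeff n) continuous_const

instance : CompleteSpace H2 := H2_isClosed.completeSpace_coe

/-- The Riesz projection `P⁺` of `L²` onto `H²`. -/
def Pp : L2 →L[ℂ] L2 := H2.subtypeL ∘L Submodule.orthogonalProjectionOnto H2

/-- The projection `P⁻ = I − P⁺` of `L²` onto `conj(H²₀)`. -/
def Pm : L2 →L[ℂ] L2 := ContinuousLinearMap.id ℂ L2 - Pp

/-- `conj(H²₀) = {f ∈ L² : f̂(n) = 0 for all n ≥ 0}`, the orthogonal complement of `H²`. -/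
def Hm : Submodule ℂ L2 where
  carrier := {f | ∀ n : ℤ, 0 ≤ n → fourierBasis.repr f n = 0}
  add_mem' := by
    intro f g hf hg n hn
    simp [map_add, hf n hn, hg n hn]
  zero_mem' := by intro n hn; simp
  smul_mem' := by
    intro c f hf n hn
    simp [_root_.map_smul, hf n hn]

/-- The constant function `1` as an element of `L²`. -/
def oneL2 : L2 := (memLp_const (1 : ℂ)).toLp _

/-- An inner function: a bounded measurable unimodular function on the circle whose
negative Fourier coefficients vanish. -/
structure InnerData where
  u : AddCircle T → ℂ
  meas : AEStronglyMeasurable u μ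
  unim : ∀ᵐ x ∂μ, ‖u x‖ = 1
  anal : ∀ n : ℤ, n < 0 → fourierCoeff u n = 0

namespace InnerData

variable (U : InnerData)

lemma bd : ∀ᵐ x ∂μ, ‖U.u x‖ ≤ 1 := by
  filter_upwards [U.unim] with x hx
  rw [hx]

/-- Multiplication by `u`: the operator `M_u` on `L²`. -/
def M : L2 →L[ℂ] L2 := mulCLM U.u U.meas U.bd

/-- Multiplication by `conj u`: the operator `M_{conj u}` on `L²`. -/
def Mc : L2 →L[ℂ] L2 :=
  mulCLM (fun x => (starRingEnd ℂ) (U.u x))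
    (Complex.continuous_conj.comp_aestronglyMeasurable U.meas)
    (by filter_upwards [U.bd] with x hx; simpa using hx)

/-- `u` as an element of `L²`. -/
def toL2 : L2 :=
  (memLp_top_of_bound U.meas 1 U.bd |>.mono_exponent le_top).toLp _

/-- The value `u(0)` of (the analytic extension of) `u` at the origin, i.e. the mean of `u`. -/
def a0 : ℂ := fourierCoeff U.u 0

/-- The subspace `uH²`. -/
def uH2 : Submodule ℂ L2 := Submodule.map (U.M : L2 →ₗ[ℂ] L2) H2

/-- The model space `K_u = H² ∩ (uH²)ᗮ`. -/
def Ku : Submodule ℂ L2 := H2 ⊓ (U.uH2)ᗮ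

lemma Ku_isClosed : IsClosed (U.Ku : Set L2) := by
  have : (U.Ku : Set L2) = (H2 : Set L2) ∩ ((U.uH2)ᗮ : Set L2) := rfl
  rw [this]
  exact H2_isClosed.inter (U.uH2).isClosed_orthogonal

instance : CompleteSpace U.Ku := U.Ku_isClosed.completeSpace_coe

/-- `K_u^⊥`, the orthogonal complement of the model space in `L²`. -/
def KP : Submodule ℂ L2 := (U.Ku)ᗮ

instance : CompleteSpace U.KP := (U.Ku).isClosed_orthogonal.completeSpace_coe

/-- The orthogonal projection `P_u : L² → K_u` (viewed as an operator on `L²`). -/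
def Pu : L2 →L[ℂ] L2 := (U.Ku).subtypeL ∘L Submodule.orthogonalProjectionOnto U.Ku

/-- The dual of the compressed shift: `D_u = (I − P_u) M_z |_{K_u^⊥}`. -/
def Du : U.KP →L[ℂ] U.KP :=
  Submodule.orthogonalProjectionOnto U.KP ∘L Mz ∘L (U.KP).subtypeL

/-- The conjugation `C_u f = u · conj(z f)` on `L²`. -/
def C (f : L2) : L2 := U.M (conjL2 (Mz f))

/-- The reproducing kernel of `K_u` at `0`: `k₀ᵘ = 1 − conj(u(0))·u`. -/
def k0 : L2 := oneL2 - (starRingEnd ℂ) U.a0 • U.toL2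

/-- The similarity `V_u = P⁻ + (conj u/conj u(0)) P⁺` of the paper. -/
def V : L2 →L[ℂ] L2 := Pm + ((starRingEnd ℂ) U.a0)⁻¹ • (U.Mc ∘L Pp)

/-- The inverse similarity `V_u⁻¹ = P⁻ + conj(u(0)) u P⁺`. -/
def Vinv : L2 →L[ℂ] L2 := Pm + (starRingEnd ℂ) U.a0 • (U.M ∘L Pp)

end InnerData

lemma Mz_mem_H2 {f : L2} (hf : f ∈ H2) : Mz f ∈ H2 := by
  intro n hn
  rw [fourierBasis_repr]
  have hcoe : (Mz f : AddCircle T → ℂ) =ᵐ[μ] fun x => zfun x * (f : AddCircle T → ℂ) x :=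
    MemLp.coeFn_toLp (memLp_mul zfun_meas zfun_norm f)
  have h1 : fourierCoeff (Mz f : AddCircle T → ℂ) n
      = fourierCoeff (f : AddCircle T → ℂ) (n - 1) := by
    unfold fourierCoeff
    rw [integral_congr_ae (by filter_upwards [hcoe] with x hx; rw [hx])]
    refine integral_congr_ae ?_
    filter_upwards with x
    have : fourier (-n) x * zfun x = fourier (-(n - 1)) x := by
      unfold zfun
      rw [show (-(n - 1) : ℤ) = -n + 1 by ring, fourier_add]
    simp only [smul_eq_mul]
    calc fourier (-n) x * (zfun x * (f : AddCircle T → ℂ) x)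
        = (fourier (-n) x * zfun x) * (f : AddCircle T → ℂ) x := by ring
      _ = fourier (-(n - 1)) x * (f : AddCircle T → ℂ) x := by rw [this]
  rw [h1]
  have := hf (n - 1) (by omega)
  rwa [fourierBasis_repr] at this

/-- The unilateral shift `S` on `H²`. -/
def Shift : H2 →L[ℂ] H2 :=
  (Mz ∘L H2.subtypeL).codRestrict H2 (fun x => Mz_mem_H2 x.2)

/-!
Since `D_u = P_{K_u^⊥} M_z` on `K_u^⊥`, its adjoint is `P_{K_u^⊥} M_{z̄}`, and everything comes
down to computing `P_{K_u}(z̄ f)` for `f ⊥ K_u`. Writing `h ∈ H²` as `h(0) + z h₁` with `h₁ ∈ H²`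
shows that for `k ∈ K_u` the function `z k - ⟪u, z k⟫ u` is again in `K_u`; hence
`⟪f, z k⟫ = ⟪f, u⟫ ⟪u, z k⟫`. On the other hand `C_u k₀ᵘ = z̄ (u - u(0))` lies in `K_u` and
`⟪C_u k₀ᵘ, k⟫ = ⟪u, z k⟫`, so `P_{K_u}(z̄ f) = ⟪u, f⟫ C_u k₀ᵘ`, and `⟪u, f⟫ = g(0)`.
On `conj(H²₀) ⊥ H²` the correction term vanishes.
-/

open scoped InnerProductSpace ComplexConjugate

lemma inner_eq_integral (f g : L2) : ⟪f, g⟫_ℂ = ∫ x, conj (f x) * g x ∂μ := by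
  rw [L2.inner_def]
  exact integral_congr_ae (.of_forall fun x => mul_comm _ _)

lemma conj_mul_self_of_norm_eq_one {z : ℂ} (hz : ‖z‖ = 1) : conj z * z = 1 := by
  rw [conj_mul', hz, Complex.ofReal_one, one_pow]

section MulCLM

variable {u v : AddCircle T → ℂ}
  (hu : AEStronglyMeasurable u μ) (hu1 : ∀ᵐ x ∂μ, ‖u x‖ ≤ 1)
  (hv : AEStronglyMeasurable v μ) (hv1 : ∀ᵐ x ∂μ, ‖v x‖ ≤ 1)

lemma coeFn_mulCLM (f : L2) : mulCLM u hu hu1 f =ᵐ[μ] fun x => u x * f x :=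
  MemLp.coeFn_toLp (memLp_mul hu hu1 f)

lemma adjoint_mulCLM (hu' : AEStronglyMeasurable (fun x => conj (u x)) μ)
    (hu1' : ∀ᵐ x ∂μ, ‖conj (u x)‖ ≤ 1) :
    (mulCLM u hu hu1).adjoint = mulCLM (fun x => conj (u x)) hu' hu1' := by
  refine ((ContinuousLinearMap.eq_adjoint_iff _ _).2 fun f g => ?_).symm
  rw [inner_eq_integral, inner_eq_integral]
  refine integral_congr_ae ?_
  filter_upwards [coeFn_mulCLM hu' hu1' f, coeFn_mulCLM hu hu1 g] with x hf hg
  rw [hf, hg, map_mul, conj_conj]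
  ring

lemma mulCLM_mulCLM_of_mul_eq_one (huv : ∀ᵐ x ∂μ, u x * v x = 1) (f : L2) :
    mulCLM u hu hu1 (mulCLM v hv hv1 f) = f := by
  refine Lp.ext ?_
  filter_upwards [coeFn_mulCLM hu hu1 (mulCLM v hv hv1 f), coeFn_mulCLM hv hv1 f, huv]
    with x h1 h2 h3
  rw [h1, h2, ← mul_assoc, h3, one_mul]

lemma mulCLM_comm (f : L2) :
    mulCLM u hu hu1 (mulCLM v hv hv1 f) = mulCLM v hv hv1 (mulCLM u hu hu1 f) := by
  refine Lp.ext ?_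
  filter_upwards [coeFn_mulCLM hu hu1 (mulCLM v hv hv1 f), coeFn_mulCLM hv hv1 f,
    coeFn_mulCLM hv hv1 (mulCLM u hu hu1 f), coeFn_mulCLM hu hu1 f] with x h1 h2 h3 h4
  rw [h1, h2, h3, h4, mul_left_comm]

lemma inner_mulCLM_mulCLM (hu_unim : ∀ᵐ x ∂μ, ‖u x‖ = 1) (f g : L2) :
    ⟪mulCLM u hu hu1 f, mulCLM u hu hu1 g⟫_ℂ = ⟪f, g⟫_ℂ := by
  have hu' := continuous_conj.comp_aestronglyMeasurable hu
  have hu1' : ∀ᵐ x ∂μ, ‖conj (u x)‖ ≤ 1 := by simpa only [RCLike.norm_conj] using hu1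
  rw [← ContinuousLinearMap.adjoint_inner_right, adjoint_mulCLM hu hu1 hu' hu1',
    mulCLM_mulCLM_of_mul_eq_one hu' hu1' hu hu1
      (hu_unim.mono fun x hx => conj_mul_self_of_norm_eq_one hx)]

end MulCLM

lemma zfun_norm_eq_one (x : AddCircle T) : ‖zfun x‖ = 1 := Circle.norm_coe _

lemma adjoint_Mz : Mz.adjoint = Mzbar := adjoint_mulCLM _ _ _ _

lemma Mz_Mzbar (f : L2) : Mz (Mzbar f) = f :=
  mulCLM_mulCLM_of_mul_eq_one _ _ _ _
    (.of_forall fun x => (mul_comm _ _).trans (conj_mul_self_of_norm_eq_one (zfun_norm_eq_one x))) f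

lemma inner_Mz_Mz (f g : L2) : ⟪Mz f, Mz g⟫_ℂ = ⟪f, g⟫_ℂ :=
  inner_mulCLM_mulCLM _ _ (.of_forall zfun_norm_eq_one) f g

lemma coeFn_Mz (f : L2) : Mz f =ᵐ[μ] fun x => zfun x * f x := coeFn_mulCLM _ _ f

lemma coeFn_Mzbar (f : L2) : Mzbar f =ᵐ[μ] fun x => conj (zfun x) * f x := coeFn_mulCLM _ _ f

lemma coeFn_oneL2 : oneL2 =ᵐ[μ] fun _ => (1 : ℂ) := MemLp.coeFn_toLp _

lemma coeFn_conjL2 (f : L2) : conjL2 f =ᵐ[μ] fun x => conj (f x) := MemLp.coeFn_toLp _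

namespace InnerData

variable (U : InnerData)

lemma coeFn_M (f : L2) : U.M f =ᵐ[μ] fun x => U.u x * f x := coeFn_mulCLM _ _ f

lemma coeFn_toL2 : U.toL2 =ᵐ[μ] U.u := MemLp.coeFn_toLp _

lemma coeFn_k0 : U.k0 =ᵐ[μ] fun x => 1 - conj U.a0 * U.u x := by
  filter_upwards [Lp.coeFn_sub oneL2 (conj U.a0 • U.toL2), Lp.coeFn_smul (conj U.a0) U.toL2,
    coeFn_oneL2, U.coeFn_toL2] with x h1 h2 h3 h4
  rw [k0, h1, Pi.sub_apply, h2, Pi.smul_apply, h3, h4, smul_eq_mul]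

lemma adjoint_M : U.M.adjoint = U.Mc := adjoint_mulCLM _ _ _ _

lemma Mc_M (f : L2) : U.Mc (U.M f) = f :=
  mulCLM_mulCLM_of_mul_eq_one _ _ _ _
    (U.unim.mono fun _ hx => conj_mul_self_of_norm_eq_one hx) f

lemma M_Mz (f : L2) : U.M (Mz f) = Mz (U.M f) := mulCLM_comm _ _ _ _ f

lemma inner_M_M (f g : L2) : ⟪U.M f, U.M g⟫_ℂ = ⟪f, g⟫_ℂ := inner_mulCLM_mulCLM _ _ U.unim f g

lemma M_oneL2 : U.M oneL2 = U.toL2 := by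
  refine Lp.ext ?_
  filter_upwards [U.coeFn_M oneL2, coeFn_oneL2, U.coeFn_toL2] with x h1 h2 h3
  rw [h1, h2, h3, mul_one]

lemma Mc_C (f : L2) : U.Mc (U.C f) = conjL2 (Mz f) := U.Mc_M _

lemma C_k0 : U.C U.k0 = Mzbar (U.toL2 - U.a0 • oneL2) := by
  refine Lp.ext ?_
  filter_upwards [U.coeFn_M (conjL2 (Mz U.k0)), coeFn_conjL2 (Mz U.k0), coeFn_Mz U.k0,
    U.coeFn_k0, coeFn_Mzbar (U.toL2 - U.a0 • oneL2), Lp.coeFn_sub U.toL2 (U.a0 • oneL2),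
    Lp.coeFn_smul U.a0 oneL2, coeFn_oneL2, U.coeFn_toL2, U.unim]
    with x h1 h2 h3 h4 h5 h6 h7 h8 h9 h10
  rw [C, h1, h2, h3, h4, h5, h6, Pi.sub_apply, h7, Pi.smul_apply, h8, h9, smul_eq_mul]
  simp only [map_mul, map_sub, map_one, conj_conj]
  linear_combination (-U.a0 * conj (zfun x)) * conj_mul_self_of_norm_eq_one h10

end InnerData

lemma fourierCoeff_fourier_mul (m n : ℤ) (f : AddCircle T → ℂ) :
    fourierCoeff (fun x => fourier m x * f x) n = fourierCoeff f (n - m) := by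
  refine integral_congr_ae (.of_forall fun x => ?_)
  simp only [smul_eq_mul, ← mul_assoc, ← fourier_add]
  congr 3
  ring

lemma repr_Mz (f : L2) (n : ℤ) :
    fourierBasis.repr (Mz f) n = fourierBasis.repr f (n - 1) := by
  rw [fourierBasis_repr, fourierBasis_repr, fourierCoeff_congr_ae (coeFn_Mz f)]
  exact fourierCoeff_fourier_mul 1 n _

lemma repr_Mzbar (f : L2) (n : ℤ) :
    fourierBasis.repr (Mzbar f) n = fourierBasis.repr f (n + 1) := by
  rw [fourierBasis_repr, fourierBasis_repr, fourierCoeff_congr_ae (coeFn_Mzbar f), ← sub_neg_eq_add]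
  simp only [zfun, ← fourier_neg]
  exact fourierCoeff_fourier_mul (-1) n _

lemma repr_conjL2 (f : L2) (n : ℤ) :
    fourierBasis.repr (conjL2 f) n = conj (fourierBasis.repr f (-n)) := by
  rw [fourierBasis_repr, fourierBasis_repr, fourierCoeff_congr_ae (coeFn_conjL2 f), fourierCoeff,
    fourierCoeff, ← integral_conj]
  refine integral_congr_ae (.of_forall fun x => ?_)
  simp only [smul_eq_mul, map_mul, neg_neg, ← fourier_neg]

lemma oneL2_eq_fourierBasis : oneL2 = fourierBasis 0 := by
  rw [coe_fourierBasis]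
  refine Lp.ext ?_
  filter_upwards [coeFn_oneL2, coeFn_fourierLp 2 0] with x h1 h2
  rw [h1, h2, fourier_zero]

lemma inner_oneL2_left (f : L2) : ⟪oneL2, f⟫_ℂ = fourierBasis.repr f 0 := by
  rw [oneL2_eq_fourierBasis, HilbertBasis.repr_apply_apply]

lemma repr_oneL2 (n : ℤ) : fourierBasis.repr oneL2 n = if n = 0 then 1 else 0 := by
  rw [oneL2_eq_fourierBasis, HilbertBasis.repr_self, lp.single_apply, Pi.single_apply]

lemma InnerData.repr_toL2 (U : InnerData) (n : ℤ) :
    fourierBasis.repr U.toL2 n = fourierCoeff U.u n := by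
  rw [fourierBasis_repr, fourierCoeff_congr_ae U.coeFn_toL2]

lemma inner_eq_tsum_repr (f g : L2) :
    ⟪f, g⟫_ℂ = ∑' n, conj (fourierBasis.repr f n) * fourierBasis.repr g n := by
  rw [← fourierBasis.tsum_inner_mul_inner]
  simp only [HilbertBasis.repr_apply_apply, inner_conj_symm]

lemma inner_eq_zero_of_mem_H2_of_mem_Hm {h q : L2} (hh : h ∈ H2) (hq : q ∈ Hm) :
    ⟪h, q⟫_ℂ = 0 := by
  rw [inner_eq_tsum_repr]
  convert tsum_zero with n
  rcases lt_or_ge n 0 with hn | hn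
  · rw [hh n hn, map_zero, zero_mul]
  · rw [hq n hn, mul_zero]

lemma oneL2_mem_H2 : oneL2 ∈ H2 := fun n hn => by rw [repr_oneL2, if_neg hn.ne]

lemma InnerData.toL2_mem_H2 (U : InnerData) : U.toL2 ∈ H2 := fun n hn => by
  rw [U.repr_toL2, U.anal n hn]

lemma Mzbar_sub_smul_oneL2_mem_H2 {g : L2} (hg : g ∈ H2) :
    Mzbar (g - fourierBasis.repr g 0 • oneL2) ∈ H2 := by
  intro n hn
  rw [repr_Mzbar, map_sub, map_smul, lp.coeFn_sub, lp.coeFn_smul, Pi.sub_apply, Pi.smul_apply,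
    repr_oneL2, smul_eq_mul]
  rcases (show n + 1 ≤ 0 by omega).eq_or_lt with h | h
  · rw [h, if_pos rfl, mul_one, sub_self]
  · rw [hg _ h, if_neg h.ne, mul_zero, sub_zero]

lemma Mzbar_mem_Hm {q : L2} (hq : q ∈ Hm) : Mzbar q ∈ Hm := fun n hn => by
  rw [repr_Mzbar, hq _ (by omega)]

lemma conjL2_Mz_mem_Hm {g : L2} (hg : g ∈ H2) : conjL2 (Mz g) ∈ Hm := fun n hn => by
  rw [repr_conjL2, repr_Mz, hg _ (by omega), map_zero]

namespace InnerData

variable (U : InnerData)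

lemma k0_mem_H2 : U.k0 ∈ H2 := H2.sub_mem oneL2_mem_H2 (H2.smul_mem _ U.toL2_mem_H2)

lemma inner_toL2_self : ⟪U.toL2, U.toL2⟫_ℂ = 1 := by
  rw [← M_oneL2, inner_M_M, inner_oneL2_left, repr_oneL2, if_pos rfl]

lemma mem_uH2_orthogonal_iff {x : L2} : x ∈ U.uH2ᗮ ↔ ∀ h ∈ H2, ⟪U.M h, x⟫_ℂ = 0 := by
  simp only [uH2, Submodule.mem_orthogonal, Submodule.mem_map, forall_exists_index, and_imp,
    forall_apply_eq_imp_iff₂, ContinuousLinearMap.coe_coe]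

lemma C_k0_mem_Ku : U.C U.k0 ∈ U.Ku := by
  refine ⟨?_, U.mem_uH2_orthogonal_iff.2 fun h hh => ?_⟩
  · rw [C_k0, a0, ← repr_toL2]
    exact Mzbar_sub_smul_oneL2_mem_H2 U.toL2_mem_H2
  · rw [← ContinuousLinearMap.adjoint_inner_right, adjoint_M, Mc_C]
    exact inner_eq_zero_of_mem_H2_of_mem_Hm hh (conjL2_Mz_mem_Hm U.k0_mem_H2)

lemma inner_C_k0_left {k : L2} (hk : k ∈ H2) : ⟪U.C U.k0, k⟫_ℂ = ⟪U.toL2, Mz k⟫_ℂ := by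
  rw [C_k0, ← adjoint_Mz, ContinuousLinearMap.adjoint_inner_left, inner_sub_left,
    inner_smul_left, inner_oneL2_left, repr_Mz, hk _ (by norm_num), mul_zero, sub_zero]

lemma inner_M_Mz_of_mem_orthogonal {h k : L2} (hh : h ∈ H2) (hk : k ∈ U.uH2ᗮ) :
    ⟪U.M h, Mz k⟫_ℂ = ⟪U.M h, U.toL2⟫_ℂ * ⟪U.toL2, Mz k⟫_ℂ := by
  set h₁ := Mzbar (h - fourierBasis.repr h 0 • oneL2)
  have hh₁ : h₁ ∈ H2 := Mzbar_sub_smul_oneL2_mem_H2 hh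
  have hdecomp : h = fourierBasis.repr h 0 • oneL2 + Mz h₁ := by rw [Mz_Mzbar]; abel
  have horth : ⟪U.M h₁, k⟫_ℂ = 0 := U.mem_uH2_orthogonal_iff.1 hk h₁ hh₁
  have hzero : ⟪U.M (Mz h₁), U.toL2⟫_ℂ = 0 := by
    rw [← M_oneL2, inner_M_M, ← inner_conj_symm, inner_oneL2_left, repr_Mz,
      hh₁ _ (by norm_num), map_zero]
  rw [hdecomp, map_add, map_smul, inner_add_left, inner_add_left, inner_smul_left,
    inner_smul_left, hzero, M_oneL2, M_Mz, inner_Mz_Mz, horth, inner_toL2_self]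
  ring

lemma Mz_sub_inner_smul_mem_Ku {k : L2} (hk : k ∈ U.Ku) :
    Mz k - ⟪U.toL2, Mz k⟫_ℂ • U.toL2 ∈ U.Ku :=
  ⟨H2.sub_mem (Mz_mem_H2 hk.1) (H2.smul_mem _ U.toL2_mem_H2),
    U.mem_uH2_orthogonal_iff.2 fun h hh => by
      rw [inner_sub_right, inner_smul_right, U.inner_M_Mz_of_mem_orthogonal hh hk.2, mul_comm,
        sub_self]⟩

lemma starProjection_Ku_Mzbar {f : L2} (hf : f ∈ U.KP) :
    U.Ku.starProjection (Mzbar f) = ⟪U.toL2, f⟫_ℂ • U.C U.k0 := by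
  refine Submodule.eq_starProjection_of_mem_of_inner_eq_zero
    (U.Ku.smul_mem _ U.C_k0_mem_Ku) fun k hk => ?_
  have hzk : ⟪f, Mz k⟫_ℂ = ⟪U.toL2, Mz k⟫_ℂ * ⟪f, U.toL2⟫_ℂ := by
    have := (Submodule.mem_orthogonal' _ _).1 hf _ (U.Mz_sub_inner_smul_mem_Ku hk)
    rwa [inner_sub_right, inner_smul_right, sub_eq_zero] at this
  rw [inner_sub_left, inner_smul_left, ← adjoint_Mz, ContinuousLinearMap.adjoint_inner_left, hzk,
    U.inner_C_k0_left hk.1, inner_conj_symm, mul_comm, sub_self]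

lemma adjoint_Du_apply (f : U.KP) :
    (U.Du.adjoint f : L2) = Mzbar f - ⟪U.toL2, f⟫_ℂ • U.C U.k0 := by
  have hDu : U.Du.adjoint = U.KP.orthogonalProjectionOnto ∘L Mzbar ∘L U.KP.subtypeL := by
    rw [Du, ContinuousLinearMap.adjoint_comp, ContinuousLinearMap.adjoint_comp,
      Submodule.adjoint_orthogonalProjectionOnto, Submodule.adjoint_subtypeL, adjoint_Mz,
      ContinuousLinearMap.comp_assoc]
  rw [hDu]
  change U.Kuᗮ.starProjection (Mzbar f) = _
  rw [Submodule.starProjection_orthogonal_val, U.starProjection_Ku_Mzbar f.2]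

lemma fourierCoeff_Pp_Mc_zero (f : L2) :
    fourierCoeff (Pp (U.Mc f) : AddCircle T → ℂ) 0 = ⟪U.toL2, f⟫_ℂ := by
  rw [← fourierBasis_repr, ← inner_oneL2_left]
  change ⟪oneL2, H2.starProjection (U.Mc f)⟫_ℂ = _
  rw [← Submodule.inner_starProjection_left_eq_right,
    Submodule.starProjection_eq_self_iff.2 oneL2_mem_H2, ← adjoint_M,
    ContinuousLinearMap.adjoint_inner_right, M_oneL2]

end InnerData

/-- `D_u^* f = conj(z) f − g(0)·C_u k₀ᵘ` where `g = P⁺(conj(u) f)`;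
in particular `D_u^*` restricted to `conj(H²₀)` is multiplication by `conj z`, which maps
`conj(H²₀)` into itself. -/
theorem Du_adjoint_formula (U : InnerData) :
    (∀ f : U.KP,
      ((ContinuousLinearMap.adjoint U.Du) f : L2)
        = Mzbar (f : L2)
          - fourierCoeff ((Pp (U.Mc (f : L2))) : AddCircle T → ℂ) 0 • U.C U.k0) ∧
    (∀ f : U.KP, (f : L2) ∈ Hm →
      ((ContinuousLinearMap.adjoint U.Du) f : L2) = Mzbar (f : L2)) ∧
    (∀ f : U.KP, (f : L2) ∈ Hm →
      ((ContinuousLinearMap.adjoint U.Du) f : L2) ∈ Hm) := by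
  have hHm (f : U.KP) (hf : (f : L2) ∈ Hm) : (U.Du.adjoint f : L2) = Mzbar f := by
    rw [U.adjoint_Du_apply, inner_eq_zero_of_mem_H2_of_mem_Hm U.toL2_mem_H2 hf, zero_smul,
      sub_zero]
  refine ⟨fun f => ?_, hHm, fun f hf => ?_⟩
  · rw [U.adjoint_Du_apply, U.fourierCoeff_Pp_Mc_zero]
  · rw [hHm f hf]
    exact Mzbar_mem_Hm hf

end Paper
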